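/- arXiv:1402.2715 — 2 statements merged into one kernel-verified Lean document; each statement's English description precedes it below -/
import Mathlib

section
/- In the affine Schur algebra S△(2,2) over ℚ at q = 1, let λ = (2,0), ν = (1,1), and identify T₁ = e_{E△_{1,2}+E△_{2,1}}. Then T₁ + e_ν = e_{E△_{1,1}+E△_{2,1}} · e_{E△_{1,1}+E△_{1,2}} lies in the ideal generated by e_λ, and conversely e_{E△_{1,1}+E△_{1,2}} (T₁ + e_ν) e_{E△_{1,1}+E△_{2,1}} = 4 e_λ, so the two-sided ideal generated by e_λ equals the two-sided ideal generated by T₁ + e_ν and T₂ + e_ν. -/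
noncomputable section

/-- The row vector `row(A) = (Σ_j a_{i,j})_i` of a `ℤ×ℤ` matrix with entries in `ℕ`. -/
def rowS (A : ℤ → ℤ → ℕ) (i : ℤ) : ℕ := ∑ᶠ j, A i j

/-- The column vector `col(A) = (Σ_i a_{i,j})_j`. -/
def colS (A : ℤ → ℤ → ℕ) (j : ℤ) : ℕ := ∑ᶠ i, A i j

/-- `Θ△(n,r)`: the set of `ℤ×ℤ` matrices over `ℕ` with `a_{i,j} = a_{i+n,j+n}`, finitely
many nonzero entries in each row and column, and total entry sum `r` over `n` consecutive
rows (equivalently columns). -/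
def ThetaAff (n r : ℕ) : Set (ℤ → ℤ → ℕ) :=
  {A | (∀ i j, A (i + n) (j + n) = A i j) ∧
       (∀ i, (Function.support (A i)).Finite) ∧
       (∀ j, (Function.support fun i => A i j).Finite) ∧
       (∑ i ∈ Finset.Icc (1 : ℤ) (n : ℤ), rowS A i) = r ∧
       (∑ j ∈ Finset.Icc (1 : ℤ) (n : ℤ), colS A j) = r}

/-- `Λ△(n,r)`: `n`-periodic sequences of natural numbers summing to `r` over a period. -/
def LambdaAff (n r : ℕ) : Set (ℤ → ℕ) :=
  {l | (∀ i, l (i + n) = l i) ∧ (∑ i ∈ Finset.Icc (1 : ℤ) (n : ℤ), l i) = r}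

/-- The diagonal matrix `diag(λ)` attached to `λ ∈ Λ△(n,r)`. -/
def diagM (l : ℤ → ℕ) : ℤ → ℤ → ℕ := fun i j => if i = j then l i else 0

/-- The `n`-periodic elementary matrix `E△_{i,j}`, with `1` at the positions
`(i + sn, j + sn)`, `s ∈ ℤ`. -/
def Edel (n : ℕ) (i j : ℤ) : ℤ → ℤ → ℕ :=
  fun x y => if x - i = y - j ∧ (n : ℤ) ∣ (x - i) then 1 else 0

/-- `Λ(∞, m)`: finitely supported sequences `t : ℤ → ℕ` with `Σ t = m`. -/
def CompInf (m : ℕ) : Set (ℤ → ℕ) :=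
  {t | (Function.support t).Finite ∧ ∑ᶠ u, t u = m}

/-- `A + Σ_u t_u (E△_{h,u} - E△_{h+1,u})`. -/
def rowAdd (n : ℕ) (h : ℤ) (t : ℤ → ℕ) (A : ℤ → ℤ → ℕ) : ℤ → ℤ → ℕ :=
  fun x y => A x y + (if (n : ℤ) ∣ (x - h) then t (y - x + h) else 0)
               - (if (n : ℤ) ∣ (x - (h + 1)) then t (y - x + (h + 1)) else 0)

/-- `A - Σ_u t_u (E△_{h,u} - E△_{h+1,u})`. -/
def rowSub (n : ℕ) (h : ℤ) (t : ℤ → ℕ) (A : ℤ → ℤ → ℕ) : ℤ → ℤ → ℕ :=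
  fun x y => A x y + (if (n : ℤ) ∣ (x - (h + 1)) then t (y - x + (h + 1)) else 0)
               - (if (n : ℤ) ∣ (x - h) then t (y - x + h) else 0)

/-- `A + Σ_u t_u (E△_{u,h+1} - E△_{u,h})`. -/
def colAdd (n : ℕ) (h : ℤ) (t : ℤ → ℕ) (A : ℤ → ℤ → ℕ) : ℤ → ℤ → ℕ :=
  fun x y => A x y + (if (n : ℤ) ∣ (y - (h + 1)) then t (x - y + (h + 1)) else 0)
               - (if (n : ℤ) ∣ (y - h) then t (x - y + h) else 0)

/-- `A - Σ_u t_u (E△_{u,h+1} - E△_{u,h})`. -/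
def colSub (n : ℕ) (h : ℤ) (t : ℤ → ℕ) (A : ℤ → ℤ → ℕ) : ℤ → ℤ → ℕ :=
  fun x y => A x y + (if (n : ℤ) ∣ (y - h) then t (x - y + h) else 0)
               - (if (n : ℤ) ∣ (y - (h + 1)) then t (x - y + (h + 1)) else 0)

/-- An algebra `S` realizing the affine Schur algebra `S△(n,r)` over `ℚ` at `q = 1`:
it has a basis `{e_A : A ∈ Θ△(n,r)}` whose structure constants vanish unless
`col(A) = row(A')`, diagonal basis elements act as partial identities, and the transpose
of matrices induces an involutory anti-automorphism `τ`. -/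
structure AffineSchurAlg (n r : ℕ) (S : Type) [Ring S] [Algebra ℚ S] where
  /-- the basis elements `e_A` (extended by `0` off `Θ△(n,r)`) -/
  e : (ℤ → ℤ → ℕ) → S
  indep : LinearIndependent ℚ (fun A : ThetaAff n r => e A.1)
  span_eq_top : Submodule.span ℚ (e '' ThetaAff n r) = ⊤
  vanish : ∀ A, A ∉ ThetaAff n r → e A = 0
  mul_disjoint : ∀ A B, A ∈ ThetaAff n r → B ∈ ThetaAff n r →
    colS A ≠ rowS B → e A * e B = 0
  diag_row : ∀ A ∈ ThetaAff n r, e (diagM (rowS A)) * e A = e A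
  diag_col : ∀ A ∈ ThetaAff n r, e A * e (diagM (colS A)) = e A
  /-- the anti-involution `e_A ↦ e_{Aᵀ}` -/
  tau : S →ₗ[ℚ] S
  tau_mul : ∀ a b : S, tau (a * b) = tau b * tau a
  tau_invol : ∀ a : S, tau (tau a) = a
  tau_e : ∀ A, tau (e A) = e (fun x y => A y x)

/-- An algebra realizing the affine Schur algebra `S△(2,2)` over `ℚ` at `q = 1`,
together with the multiplication formulas of Lusztig and of Du–Deng–Fu
(Propositions 2.5, 2.6, 2.7 of the paper, for `n = 2`), and the shift formulas
(multiplication by `e_{2E△_{1,3}}` and `e_{2E△_{3,1}}`) coming from the Hecke-algebra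
description. -/
structure AffineSchur22 (S : Type) [Ring S] [Algebra ℚ S] extends
    AffineSchurAlg 2 2 S where
  /-- Proposition 2.5(1): multiplication by `e_{B_m}`,
  `B_m = diag(λ) + m E△_{h,h+1} - m E△_{h+1,h+1}`, `λ = row(A)`. -/
  lusztig_row_plus : ∀ (h : ℤ) (m : ℕ), ∀ A ∈ ThetaAff 2 2, m ≤ rowS A (h + 1) →
    e (fun x y => diagM (rowS A) x y + m * Edel 2 h (h + 1) x y
        - m * Edel 2 (h + 1) (h + 1) x y) * e A
      = ∑ᶠ t ∈ {t | t ∈ CompInf m ∧ ∀ u, t u ≤ A (h + 1) u},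
          ((∏ᶠ u, Nat.choose (A h u + t u) (t u) : ℕ) : ℚ) • e (rowAdd 2 h t A)
  /-- Proposition 2.5(2): multiplication by `e_{C_m}`,
  `C_m = diag(λ) - m E△_{h,h} + m E△_{h+1,h}`, `λ = row(A)`. -/
  lusztig_row_minus : ∀ (h : ℤ) (m : ℕ), ∀ A ∈ ThetaAff 2 2, m ≤ rowS A h →
    e (fun x y => diagM (rowS A) x y - m * Edel 2 h h x y
        + m * Edel 2 (h + 1) h x y) * e A
      = ∑ᶠ t ∈ {t | t ∈ CompInf m ∧ ∀ u, t u ≤ A h u},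
          ((∏ᶠ u, Nat.choose (A (h + 1) u + t u) (t u) : ℕ) : ℚ) • e (rowSub 2 h t A)
  /-- Proposition 2.6(1): right multiplication by `e_{B_m}`,
  `B_m = diag(λ) + m E△_{h,h+1} - m E△_{h,h}`, `λ = col(A)`. -/
  lusztig_col_plus : ∀ (h : ℤ) (m : ℕ), ∀ A ∈ ThetaAff 2 2, m ≤ colS A h →
    e A * e (fun x y => diagM (colS A) x y + m * Edel 2 h (h + 1) x y
        - m * Edel 2 h h x y)
      = ∑ᶠ t ∈ {t | t ∈ CompInf m ∧ ∀ u, t u ≤ A u h},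
          ((∏ᶠ u, Nat.choose (A u (h + 1) + t u) (t u) : ℕ) : ℚ) • e (colAdd 2 h t A)
  /-- Proposition 2.6(2): right multiplication by `e_{C_m}`,
  `C_m = diag(λ) - m E△_{h+1,h+1} + m E△_{h+1,h}`, `λ = col(A)`. -/
  lusztig_col_minus : ∀ (h : ℤ) (m : ℕ), ∀ A ∈ ThetaAff 2 2, m ≤ colS A (h + 1) →
    e A * e (fun x y => diagM (colS A) x y - m * Edel 2 (h + 1) (h + 1) x y
        + m * Edel 2 (h + 1) h x y)
      = ∑ᶠ t ∈ {t | t ∈ CompInf m ∧ ∀ u, t u ≤ A u (h + 1)},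
          ((∏ᶠ u, Nat.choose (A u h + t u) (t u) : ℕ) : ℚ) • e (colSub 2 h t A)
  /-- Proposition 2.7: multiplication by `e_{D_m}`,
  `D_m = diag(λ) - E△_{h,h} + E△_{h,h+mn}`, `λ = row(A)`, `m ≠ 0`. -/
  lusztig_shift : ∀ (h : ℤ) (m : ℤ), m ≠ 0 → ∀ A ∈ ThetaAff 2 2, 1 ≤ rowS A h →
    e (fun x y => diagM (rowS A) x y - Edel 2 h h x y + Edel 2 h (h + 2 * m) x y) * e A
      = ∑ᶠ u ∈ {u : ℤ | 1 ≤ A h u},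
          ((A h (u + 2 * m) + 1 : ℕ) : ℚ) •
            e (fun x y => A x y + Edel 2 h (u + 2 * m) x y - Edel 2 h u x y)
  /-- multiplication by `e_{2E△_{1,3}}` shifts both column indices by `2`
  (Proposition 2.8 of the paper). -/
  x2_shift : ∀ i j : ℤ,
    e (fun x y => 2 * Edel 2 1 3 x y) * e (fun x y => Edel 2 1 i x y + Edel 2 1 j x y)
      = e (fun x y => Edel 2 1 (i + 2) x y + Edel 2 1 (j + 2) x y)
  /-- multiplication by `e_{2E△_{3,1}}` shifts both column indices by `-2`. -/
  x2inv_shift : ∀ i j : ℤ,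
    e (fun x y => 2 * Edel 2 3 1 x y) * e (fun x y => Edel 2 1 i x y + Edel 2 1 j x y)
      = e (fun x y => Edel 2 1 (i - 2) x y + Edel 2 1 (j - 2) x y)

/-- The weight `λ = (2,0) ∈ Λ△(2,2)`. -/
def lam0 : ℤ → ℕ := fun i => if (2 : ℤ) ∣ (i - 1) then 2 else 0

/-- The weight `μ = (0,2) ∈ Λ△(2,2)`. -/
def mu0 : ℤ → ℕ := fun i => if (2 : ℤ) ∣ (i - 2) then 2 else 0

/-- The weight `ν = (1,1) ∈ Λ△(2,2)`. -/
def nu0 : ℤ → ℕ := fun _ => 1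

/-- The matrix `E△_{i,j} + E△_{k,l}` (for `n = 2`). -/
def Mat2 (i j k l : ℤ) : ℤ → ℤ → ℕ := fun x y => Edel 2 i j x y + Edel 2 k l x y

end

/-! Both `T₁ + e_ν` and `T₂ + e_ν` factor through `e_λ`: one instance of Lusztig's formula
(moving one entry between adjacent rows) gives `e_{E△₁₁+E△₂₁} e_{E△₁₁+E△₁₂} = T₁ + e_ν` and
`e_{E△₁₁+E△₂₃} e_{E△₁₀+E△₁₁} = T₂ + e_ν`, and the left factors have column weight `λ`, so `e_λ`
can be inserted between the factors. Conversely `e_{E△₁₁+E△₁₂} e_{E△₁₁+E△₂₁} = 2 e_λ`, so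
sandwiching `T₁ + e_ν` between these two elements gives `(2 e_λ)² = 4 e_λ`. -/

open Function

theorem mem_compInf_one_iff {t : ℤ → ℕ} : t ∈ CompInf 1 ↔ ∃ u, t = Pi.single u 1 := by
  constructor
  · rintro ⟨hfin, hsum⟩
    obtain ⟨u, hu⟩ := (Finsupp.sum_eq_one_iff (Finsupp.ofSupportFinite t hfin)).1 <| by
      rw [← hsum, finsum_eq_sum _ hfin]; rfl
    exact ⟨u, by rw [← Finsupp.single_eq_pi_single, ← hu, Finsupp.ofSupportFinite_coe]⟩
  · rintro ⟨u, rfl⟩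
    exact ⟨(Set.finite_singleton u).subset Pi.support_single_subset,
      by rw [finsum_eq_single _ u fun v hv => Pi.single_eq_of_ne hv 1, Pi.single_eq_same]⟩

theorem setOf_mem_compInf_one_le (g : ℤ → ℕ) :
    {t | t ∈ CompInf 1 ∧ ∀ u, t u ≤ g u} = (fun u => Pi.single u 1) '' support g := by
  ext t
  simp only [Set.mem_ofPred_eq, mem_compInf_one_iff, Set.mem_image, mem_support]
  constructor
  · rintro ⟨⟨u, rfl⟩, hle⟩
    exact ⟨u, Nat.one_le_iff_ne_zero.1 (by simpa using hle u), rfl⟩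
  · rintro ⟨u, hu, rfl⟩
    refine ⟨⟨u, rfl⟩, fun v => ?_⟩
    rcases eq_or_ne v u with rfl | hv
    · simpa [Nat.one_le_iff_ne_zero] using hu
    · simp [hv]

theorem finsum_mem_compInf_one_le {M : Type*} [AddCommMonoid M] (g : ℤ → ℕ)
    (f : (ℤ → ℕ) → M) :
    ∑ᶠ t ∈ {t | t ∈ CompInf 1 ∧ ∀ u, t u ≤ g u}, f t
      = ∑ᶠ u ∈ support g, f (Pi.single u 1) := by
  rw [setOf_mem_compInf_one_le, finsum_mem_image fun u _ v _ huv => by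
    simpa [Pi.single_apply, eq_comm] using congrFun huv u]

theorem finprod_choose_add_single (g : ℤ → ℕ) (a : ℤ) :
    ∏ᶠ u, (g u + (Pi.single a 1 : ℤ → ℕ) u).choose ((Pi.single a 1 : ℤ → ℕ) u) = g a + 1 := by
  rw [finprod_eq_single _ a fun u hu => by simp [hu]]
  simp

theorem edel_add_add (n : ℕ) (i j x y : ℤ) : Edel n i j (x + n) (y + n) = Edel n i j x y := by
  simp only [Edel, show x + n - i = x - i + n by ring, show y + n - j = y - j + n by ring,
    add_left_inj, dvd_add_self_right]

theorem finite_support_edel_row (n : ℕ) (i j x : ℤ) :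
    (support fun y => Edel n i j x y).Finite :=
  (Set.finite_singleton (x - i + j)).subset fun y hy => by
    simp only [mem_support, Edel, ne_eq, ite_eq_right_iff, Classical.not_imp] at hy
    simp only [Set.mem_singleton_iff]; omega

theorem finite_support_edel_col (n : ℕ) (i j y : ℤ) :
    (support fun x => Edel n i j x y).Finite :=
  (Set.finite_singleton (y - j + i)).subset fun x hx => by
    simp only [mem_support, Edel, ne_eq, ite_eq_right_iff, Classical.not_imp] at hx
    simp only [Set.mem_singleton_iff]; omega

theorem finsum_edel_row (n : ℕ) (i j x : ℤ) :
    ∑ᶠ y, Edel n i j x y = if (n : ℤ) ∣ x - i then 1 else 0 := by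
  rw [finsum_eq_single _ (x - i + j) fun y hy => by simp only [Edel]; exact if_neg (by omega)]
  simp [Edel]

theorem finsum_edel_col (n : ℕ) (i j y : ℤ) :
    ∑ᶠ x, Edel n i j x y = if (n : ℤ) ∣ y - j then 1 else 0 := by
  rw [finsum_eq_single _ (y - j + i) fun x hx => by simp only [Edel]; exact if_neg (by omega)]
  simp [Edel]

theorem rowS_mat2 (i j k l x : ℤ) :
    rowS (Mat2 i j k l) x
      = (if (2 : ℤ) ∣ x - i then 1 else 0) + if (2 : ℤ) ∣ x - k then 1 else 0 := by
  unfold rowS Mat2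
  rw [finsum_add_distrib (finite_support_edel_row 2 i j x)
    (finite_support_edel_row 2 k l x), finsum_edel_row, finsum_edel_row, Nat.cast_ofNat]

theorem colS_mat2 (i j k l y : ℤ) :
    colS (Mat2 i j k l) y
      = (if (2 : ℤ) ∣ y - j then 1 else 0) + if (2 : ℤ) ∣ y - l then 1 else 0 := by
  unfold colS Mat2
  rw [finsum_add_distrib (finite_support_edel_col 2 i j y)
    (finite_support_edel_col 2 k l y), finsum_edel_col, finsum_edel_col, Nat.cast_ofNat]

theorem mat2_mem_thetaAff (i j k l : ℤ) : Mat2 i j k l ∈ ThetaAff 2 2 := by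
  have hIcc : Finset.Icc (1 : ℤ) (2 : ℕ) = {1, 2} := rfl
  refine ⟨fun x y => ?_, fun x => ?_, fun y => ?_, ?_, ?_⟩
  · simp only [Mat2, edel_add_add]
  · exact ((finite_support_edel_row 2 i j x).union (finite_support_edel_row 2 k l x)).subset
      (support_add _ _)
  · exact ((finite_support_edel_col 2 i j y).union (finite_support_edel_col 2 k l y)).subset
      (support_add _ _)
  · simp only [hIcc, Finset.sum_pair (show (1 : ℤ) ≠ 2 by decide), rowS_mat2]
    split_ifs <;> omega
  · simp only [hIcc, Finset.sum_pair (show (1 : ℤ) ≠ 2 by decide), colS_mat2]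
    split_ifs <;> omega

theorem diagM_lam0 : diagM lam0 = Mat2 1 1 1 1 := by
  funext x y
  simp only [diagM, lam0, Mat2, Edel]
  split_ifs <;> omega

theorem colS_mat2_eq_lam0 (i k : ℤ) {j l : ℤ} (hj : (2 : ℤ) ∣ j - 1) (hl : (2 : ℤ) ∣ l - 1) :
    colS (Mat2 i j k l) = lam0 := by
  funext y
  simp only [colS_mat2, lam0]
  split_ifs <;> omega

namespace AffineSchur22

variable {S : Type} [Ring S] [Algebra ℚ S] (H : AffineSchur22 S)

theorem lusztig_row_plus_one (h : ℤ) {A : ℤ → ℤ → ℕ} (hA : A ∈ ThetaAff 2 2)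
    (hrow : 1 ≤ rowS A (h + 1)) :
    H.e (fun x y => diagM (rowS A) x y + Edel 2 h (h + 1) x y - Edel 2 (h + 1) (h + 1) x y)
        * H.e A
      = ∑ᶠ u ∈ support (A (h + 1)),
          ((A h u + 1 : ℕ) : ℚ) • H.e (rowAdd 2 h (Pi.single u 1) A) := by
  simpa only [Nat.cast_one, one_mul, finsum_mem_compInf_one_le, finprod_choose_add_single]
    using H.lusztig_row_plus h 1 A hA hrow

theorem lusztig_row_minus_one (h : ℤ) {A : ℤ → ℤ → ℕ} (hA : A ∈ ThetaAff 2 2)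
    (hrow : 1 ≤ rowS A h) :
    H.e (fun x y => diagM (rowS A) x y - Edel 2 h h x y + Edel 2 (h + 1) h x y) * H.e A
      = ∑ᶠ u ∈ support (A h),
          ((A (h + 1) u + 1 : ℕ) : ℚ) • H.e (rowSub 2 h (Pi.single u 1) A) := by
  simpa only [Nat.cast_one, one_mul, finsum_mem_compInf_one_le, finprod_choose_add_single]
    using H.lusztig_row_minus h 1 A hA hrow

theorem e_mat2_mul_e_lam (i k : ℤ) {j l : ℤ} (hj : (2 : ℤ) ∣ j - 1) (hl : (2 : ℤ) ∣ l - 1) :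
    H.e (Mat2 i j k l) * H.e (diagM lam0) = H.e (Mat2 i j k l) := by
  simpa only [colS_mat2_eq_lam0 i k hj hl] using H.diag_col _ (mat2_mem_thetaAff i j k l)

theorem e_lam_mul_e_lam :
    H.e (diagM lam0) * H.e (diagM lam0) = H.e (diagM lam0) := by
  simpa only [← diagM_lam0] using
    H.e_mat2_mul_e_lam 1 1 (j := 1) (l := 1) (by decide) (by decide)

theorem e_mul_e_eq_T1_add_e_nu :
    H.e (Mat2 1 1 2 1) * H.e (Mat2 1 1 1 2) = H.e (Mat2 1 2 2 1) + H.e (diagM nu0) := by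
  have hgen : Mat2 1 1 2 1 = fun x y => diagM (rowS (Mat2 1 1 1 2)) x y - Edel 2 1 1 x y
      + Edel 2 (1 + 1) 1 x y := by
    funext x y
    simp only [diagM, rowS_mat2, Mat2, Edel]
    split_ifs <;> omega
  have hsupp : support (Mat2 1 1 1 2 1) = {1, 2} := by
    ext u
    simp only [mem_support, Mat2, Edel, Set.mem_insert_iff, Set.mem_singleton_iff]
    split_ifs <;> omega
  have hT1 : rowSub 2 1 (Pi.single 1 1) (Mat2 1 1 1 2) = Mat2 1 2 2 1 := by
    funext x y
    simp only [rowSub, Mat2, Edel, Pi.single_apply]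
    split_ifs <;> omega
  have hnu : rowSub 2 1 (Pi.single 2 1) (Mat2 1 1 1 2) = diagM nu0 := by
    funext x y
    simp only [rowSub, Mat2, Edel, Pi.single_apply, diagM, nu0]
    split_ifs <;> omega
  rw [hgen, H.lusztig_row_minus_one 1 (mat2_mem_thetaAff 1 1 1 2) (by simp [rowS_mat2]),
    hsupp, finsum_mem_pair (by decide), hT1, hnu]
  simp [Mat2, Edel]

theorem e_mul_e_eq_two_smul_e_lam :
    H.e (Mat2 1 1 1 2) * H.e (Mat2 1 1 2 1) = (2 : ℚ) • H.e (diagM lam0) := by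
  have hgen : Mat2 1 1 1 2 = fun x y => diagM (rowS (Mat2 1 1 2 1)) x y + Edel 2 1 (1 + 1) x y
      - Edel 2 (1 + 1) (1 + 1) x y := by
    funext x y
    simp only [diagM, rowS_mat2, Mat2, Edel]
    split_ifs <;> omega
  have hsupp : support (Mat2 1 1 2 1 (1 + 1)) = {1} := by
    ext u
    simp only [mem_support, Mat2, Edel, Set.mem_singleton_iff]
    split_ifs <;> omega
  have hlam : rowAdd 2 1 (Pi.single 1 1) (Mat2 1 1 2 1) = diagM lam0 := by
    funext x y
    simp only [rowAdd, Mat2, Edel, Pi.single_apply, diagM, lam0]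
    split_ifs <;> omega
  rw [hgen, H.lusztig_row_plus_one 1 (mat2_mem_thetaAff 1 1 2 1) (by simp [rowS_mat2]),
    hsupp, finsum_mem_singleton, hlam]
  norm_num [Mat2, Edel]

theorem e_mul_e_eq_T2_add_e_nu :
    H.e (Mat2 1 1 2 3) * H.e (Mat2 1 0 1 1) = H.e (Mat2 2 3 3 2) + H.e (diagM nu0) := by
  have hgen : Mat2 1 1 2 3 = fun x y => diagM (rowS (Mat2 1 0 1 1)) x y + Edel 2 2 (2 + 1) x y
      - Edel 2 (2 + 1) (2 + 1) x y := by
    funext x y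
    simp only [diagM, rowS_mat2, Mat2, Edel]
    split_ifs <;> omega
  have hsupp : support (Mat2 1 0 1 1 (2 + 1)) = {2, 3} := by
    ext u
    simp only [mem_support, Mat2, Edel, Set.mem_insert_iff, Set.mem_singleton_iff]
    split_ifs <;> omega
  have hnu : rowAdd 2 2 (Pi.single 2 1) (Mat2 1 0 1 1) = diagM nu0 := by
    funext x y
    simp only [rowAdd, Mat2, Edel, Pi.single_apply, diagM, nu0]
    split_ifs <;> omega
  have hT2 : rowAdd 2 2 (Pi.single 3 1) (Mat2 1 0 1 1) = Mat2 2 3 3 2 := by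
    funext x y
    simp only [rowAdd, Mat2, Edel, Pi.single_apply]
    split_ifs <;> omega
  rw [hgen, H.lusztig_row_plus_one 2 (mat2_mem_thetaAff 1 0 1 1) (by simp [rowS_mat2]),
    hsupp, finsum_mem_pair (by decide), hnu, hT2, add_comm]
  simp [Mat2, Edel]

theorem T1_add_e_nu_eq_mul_e_lam_mul :
    H.e (Mat2 1 2 2 1) + H.e (diagM nu0)
      = H.e (Mat2 1 1 2 1) * H.e (diagM lam0) * H.e (Mat2 1 1 1 2) := by
  rw [H.e_mat2_mul_e_lam 1 2 (by decide) (by decide), H.e_mul_e_eq_T1_add_e_nu]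

theorem T2_add_e_nu_eq_mul_e_lam_mul :
    H.e (Mat2 2 3 3 2) + H.e (diagM nu0)
      = H.e (Mat2 1 1 2 3) * H.e (diagM lam0) * H.e (Mat2 1 0 1 1) := by
  rw [H.e_mat2_mul_e_lam 1 2 (by decide) (by decide), H.e_mul_e_eq_T2_add_e_nu]

theorem e_mul_T1_add_e_nu_mul_e :
    H.e (Mat2 1 1 1 2) * (H.e (Mat2 1 2 2 1) + H.e (diagM nu0)) * H.e (Mat2 1 1 2 1)
      = (4 : ℚ) • H.e (diagM lam0) := by
  rw [← H.e_mul_e_eq_T1_add_e_nu, ← mul_assoc, H.e_mul_e_eq_two_smul_e_lam, mul_assoc,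
    H.e_mul_e_eq_two_smul_e_lam, smul_mul_smul_comm, H.e_lam_mul_e_lam]
  norm_num

end AffineSchur22

/-- from Lemma 4.1 of the paper. In `S△(2,2)` over `ℚ` at `q = 1`,
with `λ = (2,0)`, `ν = (1,1)`, and `T₁ = e_{E△_{1,2}+E△_{2,1}}`,
`T₂ = e_{E△_{2,3}+E△_{3,2}}`:
`T₁ + e_ν = e_{E△_{1,1}+E△_{2,1}} ⬝ e_{E△_{1,1}+E△_{1,2}}` lies in the two-sided ideal
generated by `e_λ`; conversely
`e_{E△_{1,1}+E△_{1,2}} (T₁ + e_ν) e_{E△_{1,1}+E△_{2,1}} = 4 e_λ`; hence the two-sided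
ideal generated by `e_λ` equals the two-sided ideal generated by `T₁ + e_ν` and
`T₂ + e_ν`. -/
theorem ideal_e_lam_eq_ideal_T1_T2 (S : Type) [Ring S] [Algebra ℚ S]
    (H : AffineSchur22 S) :
    (H.e (Mat2 1 1 2 1) * H.e (Mat2 1 1 1 2) = H.e (Mat2 1 2 2 1) + H.e (diagM nu0)) ∧
    (H.e (Mat2 1 2 2 1) + H.e (diagM nu0) ∈
      Submodule.span ℚ {y : S | ∃ a b : S, y = a * H.e (diagM lam0) * b}) ∧
    (H.e (Mat2 1 1 1 2) * (H.e (Mat2 1 2 2 1) + H.e (diagM nu0)) * H.e (Mat2 1 1 2 1)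
      = (4 : ℚ) • H.e (diagM lam0)) ∧
    (Submodule.span ℚ {y : S | ∃ a b : S, y = a * H.e (diagM lam0) * b} =
      Submodule.span ℚ {y : S | ∃ a b : S,
        y = a * (H.e (Mat2 1 2 2 1) + H.e (diagM nu0)) * b ∨
        y = a * (H.e (Mat2 2 3 3 2) + H.e (diagM nu0)) * b}) := by
  refine ⟨H.e_mul_e_eq_T1_add_e_nu,
    Submodule.subset_span ⟨_, _, H.T1_add_e_nu_eq_mul_e_lam_mul⟩, H.e_mul_T1_add_e_nu_mul_e,
    le_antisymm (Submodule.span_le.2 ?_) (Submodule.span_le.2 ?_)⟩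
  · rintro _ ⟨a, b, rfl⟩
    rw [← inv_smul_smul₀ (four_ne_zero' ℚ) (H.e (diagM lam0)), ← H.e_mul_T1_add_e_nu_mul_e,
      mul_smul_comm, smul_mul_assoc]
    refine Submodule.smul_mem _ _ (Submodule.subset_span
      ⟨a * H.e (Mat2 1 1 1 2), H.e (Mat2 1 1 2 1) * b, .inl ?_⟩)
    simp only [mul_assoc]
  · rintro _ ⟨a, b, rfl | rfl⟩
    · refine Submodule.subset_span ⟨a * H.e (Mat2 1 1 2 1), H.e (Mat2 1 1 1 2) * b, ?_⟩
      rw [H.T1_add_e_nu_eq_mul_e_lam_mul]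
      simp only [mul_assoc]
    · refine Submodule.subset_span ⟨a * H.e (Mat2 1 1 2 3), H.e (Mat2 1 0 1 1) * b, ?_⟩
      rw [H.T2_add_e_nu_eq_mul_e_lam_mul]
      simp only [mul_assoc]
end

section
/- Let R be a ring, e ∈ R an idempotent, and B = eRe. If Re is a free right B-module with finite basis and eR is a free left B-module with finite basis, and the multiplication map Re ⊗_B eR → ReR is injective, then ReR ≅ Re ⊗_B eR as R-bimodules and ReR is projective both as a left R-module and as a right R-module. -/
/-! `ReR` is the image of `d ↦ ∑ⱼ dⱼ e wⱼ` on `Rⁿ`: for a generator `a e b`, expand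
`e b = ∑ⱼ bⱼ wⱼ`. Expanding each `dⱼ e ∈ Re` along `v` turns a relation `∑ⱼ dⱼ e wⱼ = 0` into a
relation `∑ᵢⱼ vᵢ fᵢⱼ wⱼ = 0`, which injectivity kills; hence the kernel of this map is that of
`d ↦ (dⱼ e)ⱼ`, and `ReR ≅ (Re)ⁿ` is a direct summand of `Rⁿ`. The right-module statement is the
same argument in `Rᵐᵒᵖ`, with the roles of `v` and `w` exchanged. -/

open MulOpposite

theorem Module.Projective.of_surjective_of_ker_le {R M N : Type*} [Ring R]
    [AddCommGroup M] [Module R M] [Module.Projective R M] [AddCommGroup N] [Module R N]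
    {f : M →ₗ[R] N} (hf : Function.Surjective f) {p : M →ₗ[R] M} (hfp : f ∘ₗ p = f)
    (hker : LinearMap.ker f ≤ LinearMap.ker p) : Module.Projective R N := by
  -- `f x ↦ p x` is a well-defined section of `f`
  refine .of_split ((LinearMap.ker f).liftQ p hker ∘ₗ (f.quotKerEquivOfSurjective hf).symm) f ?_
  ext y
  obtain ⟨x, rfl⟩ := hf y
  simpa using LinearMap.congr_fun hfp x

variable {R : Type*} [Ring R] {ι κ : Type*} [Fintype ι]

def SpansRightCorner (e : R) (v : ι → R) : Prop :=
  ∀ x, x * e = x → ∃ b : ι → R, (∀ i, e * b i * e = b i) ∧ x = ∑ i, v i * b i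

theorem SpansRightCorner.exists_mul_eq_sum {e : R} {v : ι → R} (he : IsIdempotentElem e)
    (hv : SpansRightCorner e v) (d : κ → R) : ∃ f : ι → κ → R, (∀ i j, e * f i j * e = f i j) ∧
      ∀ j, d j * e = ∑ i, v i * f i j := by
  choose f hf hdf using fun j => hv (d j * e) (by rw [mul_assoc, he.eq])
  exact ⟨fun i j => f j i, fun i j => hf j i, hdf⟩

variable [Fintype κ]

def SpansLeftCorner (e : R) (w : κ → R) : Prop :=
  ∀ x, e * x = x → ∃ b : κ → R, (∀ j, e * b j * e = b j) ∧ x = ∑ j, b j * w j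

/-- Injectivity of the multiplication map `Re ⊗_{eRe} eR → R`, read in families `v` of `Re` and
`w` of `eR`. -/
def CornerMulInjective (e : R) (v : ι → R) (w : κ → R) : Prop :=
  ∀ f : ι → κ → R, (∀ i j, e * f i j * e = f i j) →
    ∑ i, ∑ j, v i * f i j * w j = 0 → ∀ i j, f i j = 0

theorem SpansLeftCorner.op {e : R} {w : κ → R} (hw : SpansLeftCorner e w) :
    SpansRightCorner (MulOpposite.op e) (MulOpposite.op ∘ w) := by
  intro x hx
  obtain ⟨b, hb, hxb⟩ := hw x.unop (by simpa using congrArg unop hx)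
  refine ⟨MulOpposite.op ∘ b, fun j => by simpa [mul_assoc] using congrArg MulOpposite.op (hb j),
    unop_injective ?_⟩
  simp [hxb]

theorem SpansRightCorner.op {e : R} {v : ι → R} (hv : SpansRightCorner e v) :
    SpansLeftCorner (MulOpposite.op e) (MulOpposite.op ∘ v) := by
  intro x hx
  obtain ⟨b, hb, hxb⟩ := hv x.unop (by simpa using congrArg unop hx)
  refine ⟨MulOpposite.op ∘ b, fun j => by simpa [mul_assoc] using congrArg MulOpposite.op (hb j),
    unop_injective ?_⟩
  simp [hxb]

theorem CornerMulInjective.op {e : R} {v : ι → R} {w : κ → R}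
    (hinj : CornerMulInjective e v w) :
    CornerMulInjective (MulOpposite.op e) (MulOpposite.op ∘ w) (MulOpposite.op ∘ v) := by
  intro f hf h j i
  have := hinj (fun i j => (f j i).unop)
    (fun i j => by simpa [mul_assoc] using congrArg unop (hf j i)) ?_ i j
  · simpa using this
  · rw [Finset.sum_comm]
    simpa [mul_assoc] using congrArg unop h

section

variable {e : R} {v : ι → R} {w : κ → R}

theorem span_mul_mul_eq_range (he : IsIdempotentElem e) (hw : SpansLeftCorner e w) :
    Ideal.span {x | ∃ a b, x = a * e * b} =
      LinearMap.range (Fintype.linearCombination R fun j => e * w j) := by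
  refine le_antisymm (Ideal.span_le.mpr ?_) ?_
  · rintro _ ⟨a, b, rfl⟩
    obtain ⟨c, hc, hbc⟩ := hw (e * b) (by rw [← mul_assoc, he.eq])
    refine ⟨fun j => a * c j, ?_⟩
    have hce : ∀ j, c j * e = c j := fun j => ((Subsemigroup.mem_corner_iff he).mp ⟨c j, hc j⟩).2
    simp only [Fintype.linearCombination_apply, smul_eq_mul, mul_assoc a, hbc, Finset.mul_sum]
    simp only [← mul_assoc, hce]
  · rintro _ ⟨d, rfl⟩
    exact Ideal.sum_mem _ fun j _ =>
      Ideal.mul_mem_left _ _ (Ideal.subset_span ⟨1, w j, by rw [one_mul]⟩)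

theorem linearCombination_mul_eq_sum_sum {f : ι → κ → R} {d : κ → R}
    (hdf : ∀ j, d j * e = ∑ i, v i * f i j) :
    Fintype.linearCombination R (fun j => e * w j) d = ∑ i, ∑ j, v i * f i j * w j := by
  simp only [Fintype.linearCombination_apply, smul_eq_mul, ← mul_assoc, hdf, Finset.sum_mul]
  exact Finset.sum_comm

theorem exists_sum_sum_eq_of_mem_span (he : IsIdempotentElem e) (hv : SpansRightCorner e v)
    (hw : SpansLeftCorner e w) {x : R} (hx : x ∈ Ideal.span {x | ∃ a b, x = a * e * b}) :
    ∃ f : ι → κ → R, (∀ i j, e * f i j * e = f i j) ∧ x = ∑ i, ∑ j, v i * f i j * w j := by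
  rw [span_mul_mul_eq_range he hw] at hx
  obtain ⟨d, rfl⟩ := hx
  obtain ⟨f, hf, hdf⟩ := hv.exists_mul_eq_sum he d
  exact ⟨f, hf, linearCombination_mul_eq_sum_sum hdf⟩

theorem ker_linearCombination_le_ker_mul (he : IsIdempotentElem e) (hv : SpansRightCorner e v)
    (hinj : CornerMulInjective e v w) :
    LinearMap.ker (Fintype.linearCombination R fun j => e * w j) ≤
      LinearMap.ker ((LinearMap.toSpanSingleton R R e).compLeft κ) := by
  intro d hd
  obtain ⟨f, hf, hdf⟩ := hv.exists_mul_eq_sum he d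
  have hf0 := hinj f hf (by rw [← linearCombination_mul_eq_sum_sum hdf]; exact hd)
  ext j
  simp [hdf j, hf0]

theorem projective_span_mul_mul (he : IsIdempotentElem e) (hv : SpansRightCorner e v)
    (hw : SpansLeftCorner e w) (hinj : CornerMulInjective e v w) :
    Module.Projective R (Ideal.span {x : R | ∃ a b, x = a * e * b}) := by
  rw [span_mul_mul_eq_range he hw]
  refine .of_surjective_of_ker_le (LinearMap.surjective_rangeRestrict _)
    (p := (LinearMap.toSpanSingleton R R e).compLeft κ) ?_ ?_
  · refine LinearMap.ext fun d => Subtype.ext ?_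
    simp [Fintype.linearCombination_apply, mul_assoc, ← mul_assoc e e, he.eq]
  · rw [LinearMap.ker_rangeRestrict]
    exact ker_linearCombination_le_ker_mul he hv hinj

end

theorem setOf_op_mul_mul_eq (e : R) :
    {x : Rᵐᵒᵖ | ∃ a b : R, x = op (a * e * b)} = {x | ∃ a b : Rᵐᵒᵖ, x = a * op e * b} := by
  ext x
  constructor
  · rintro ⟨a, b, rfl⟩
    exact ⟨op b, op a, by simp [mul_assoc]⟩
  · rintro ⟨a, b, rfl⟩
    exact ⟨b.unop, a.unop, by simp [mul_assoc]⟩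

theorem corner_free_mult_injective_implies_iso_and_projective_general
    (R : Type) [Ring R] (e : R) (he : e * e = e) (m n : ℕ)
    (v : Fin m → R) (w : Fin n → R)
    (hv_span : ∀ x : R, x * e = x →
      ∃ b : Fin m → R, (∀ i, e * b i * e = b i) ∧ x = ∑ i, v i * b i)
    (hw_span : ∀ x : R, e * x = x →
      ∃ b : Fin n → R, (∀ j, e * b j * e = b j) ∧ x = ∑ j, b j * w j)
    (hinj : ∀ f : Fin m → Fin n → R, (∀ i j, e * f i j * e = f i j) →
      (∑ i, ∑ j, v i * f i j * w j) = 0 → ∀ i j, f i j = 0) :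
    (∀ x ∈ Ideal.span {x : R | ∃ a b : R, x = a * e * b},
      ∃ f : Fin m → Fin n → R, (∀ i j, e * f i j * e = f i j) ∧
        x = ∑ i, ∑ j, v i * f i j * w j) ∧
    Module.Projective R (Ideal.span {x : R | ∃ a b : R, x = a * e * b}) ∧
    Module.Projective Rᵐᵒᵖ
      (Ideal.span {x : Rᵐᵒᵖ | ∃ a b : R, x = MulOpposite.op (a * e * b)}) := by
  refine ⟨fun x hx => exists_sum_sum_eq_of_mem_span he hv_span hw_span hx,
    projective_span_mul_mul he hv_span hw_span hinj, ?_⟩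
  rw [setOf_op_mul_mul_eq]
  exact projective_span_mul_mul (congrArg op he) (SpansLeftCorner.op hw_span)
    (SpansRightCorner.op hv_span) (CornerMulInjective.op hinj)

/-- Let `R` be a ring, `e` an idempotent, `B = eRe` the corner ring.
Suppose `Re` is a free `B`-module with finite basis `v` (unique expansions
`x = Σᵢ vᵢ bᵢ`, `bᵢ ∈ B`), `eR` is a free `B`-module with finite basis `w` (unique
expansions `x = Σⱼ bⱼ wⱼ`), and the multiplication map `Re ⊗_B eR → ReR` is injective
(no nontrivial relation `Σᵢⱼ vᵢ fᵢⱼ wⱼ = 0` with `fᵢⱼ ∈ B`).  Then the multiplication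
map is an isomorphism of `R`-bimodules `Re ⊗_B eR ≅ ReR` — every element of `ReR` has a
(then unique) expansion `Σᵢⱼ vᵢ fᵢⱼ wⱼ` — and `ReR` is projective both as a left
`R`-module and as a right `R`-module. -/
theorem corner_free_mult_injective_implies_iso_and_projective
    (R : Type) [Ring R] (e : R) (he : e * e = e) (m n : ℕ)
    (v : Fin m → R) (w : Fin n → R)
    (hv_mem : ∀ i, v i * e = v i) (hw_mem : ∀ j, e * w j = w j)
    (hv_span : ∀ x : R, x * e = x →
      ∃ b : Fin m → R, (∀ i, e * b i * e = b i) ∧ x = ∑ i, v i * b i)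
    (hv_indep : ∀ b c : Fin m → R, (∀ i, e * b i * e = b i) → (∀ i, e * c i * e = c i) →
      (∑ i, v i * b i) = ∑ i, v i * c i → b = c)
    (hw_span : ∀ x : R, e * x = x →
      ∃ b : Fin n → R, (∀ j, e * b j * e = b j) ∧ x = ∑ j, b j * w j)
    (hw_indep : ∀ b c : Fin n → R, (∀ j, e * b j * e = b j) → (∀ j, e * c j * e = c j) →
      (∑ j, b j * w j) = ∑ j, c j * w j → b = c)
    (hinj : ∀ f : Fin m → Fin n → R, (∀ i j, e * f i j * e = f i j) →
      (∑ i, ∑ j, v i * f i j * w j) = 0 → ∀ i j, f i j = 0) :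
    (∀ x ∈ Ideal.span {x : R | ∃ a b : R, x = a * e * b},
      ∃ f : Fin m → Fin n → R, (∀ i j, e * f i j * e = f i j) ∧
        x = ∑ i, ∑ j, v i * f i j * w j) ∧
    Module.Projective R (Ideal.span {x : R | ∃ a b : R, x = a * e * b}) ∧
    Module.Projective Rᵐᵒᵖ
      (Ideal.span {x : Rᵐᵒᵖ | ∃ a b : R, x = MulOpposite.op (a * e * b)}) :=
  corner_free_mult_injective_implies_iso_and_projective_general R e he m n v w hv_span hw_span hinj
end
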